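/- For a linear map f*: V → W and a linear generalized complex structure J on W with tensors (A, π, σ), the pullback f⃖*L ∩ f⃖*L̄ equals the complexification of ker f* (i.e., f* is backward regular) if and only if im f* ∩ π♯(ker f*ᵗ) = 0 and A(im f*) ⊆ im f* + im π♯. -/

import Mathlib

/-!
Because `J² = -1`, a complex vector lies in `f⃖*L ∩ f⃖*L̄` exactly when both of its real parts
have the form `(X, fᵗc)` with `(fX, c) = J(0, d)` for some `d ∈ ker fᵗ`: its lifts to `L` and to
`L̄` differ by an element of `0 ⊕ ker fᵗ`, and conversely `w - iJw ∈ L` for every real `w`. So the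
intersection is the complexification of the real subspace `f⃖*J(0 ⊕ ker fᵗ)`, and backward
regularity says that this subspace is `ker f ⊕ 0`. Since `J(0, d) = (π♯d, -Aᵗd)`, this means that
`π♯d ∈ im f` forces `π♯d = 0`, i.e. `im f ∩ π♯(ker fᵗ) = 0`, and that then `fᵗAᵗd = 0`. The latter
says that `Aᵗ` maps `ker fᵗ ∩ ker π♯ = (im f + im π♯)⁰` into `ker fᵗ = (im f)⁰`, which is dual to
`A(im f) ⊆ im f + im π♯`; skew-symmetry of `π` is what identifies `(im π♯)⁰` with `ker π♯`.
-/

open LinearMap Module TensorProduct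

/-- The block endomorphism `J(X,α) = (AX + π♯α, σ♭X - A*α)` of `W ⊕ W*`. -/
noncomputable def blockJ {W : Type*} [AddCommGroup W] [Module ℝ W]
    (A : W →ₗ[ℝ] W) (piSh : Module.Dual ℝ W →ₗ[ℝ] W)
    (sigFl : W →ₗ[ℝ] Module.Dual ℝ W) :
    (W × Module.Dual ℝ W) →ₗ[ℝ] (W × Module.Dual ℝ W) :=
  ((A ∘ₗ fst ℝ W (Module.Dual ℝ W)) + (piSh ∘ₗ snd ℝ W (Module.Dual ℝ W))).prod
    ((sigFl ∘ₗ fst ℝ W (Module.Dual ℝ W)) - (A.dualMap ∘ₗ snd ℝ W (Module.Dual ℝ W)))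

/-- The complexified pullback operation `f⃖* : subspaces of (W ⊕ W*)ᶜ →
subspaces of (V ⊕ V*)ᶜ`. -/
noncomputable def PullbackC {V W : Type*} [AddCommGroup V] [Module ℝ V]
    [AddCommGroup W] [Module ℝ W] (f : V →ₗ[ℝ] W)
    (U : Submodule ℂ (ℂ ⊗[ℝ] (W × Module.Dual ℝ W))) :
    Submodule ℂ (ℂ ⊗[ℝ] (V × Module.Dual ℝ V)) :=
  Submodule.map ((LinearMap.prodMap (LinearMap.id (M := V)) f.dualMap).baseChange ℂ)
    (Submodule.comap
      ((LinearMap.prodMap f (LinearMap.id (M := Module.Dual ℝ W))).baseChange ℂ) U)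

section Complexification

open Complex (I)

variable {M N : Type*} [AddCommGroup M] [Module ℝ M] [AddCommGroup N] [Module ℝ N]

theorem exists_eq_one_tmul_add_I_tmul (z : ℂ ⊗[ℝ] M) :
    ∃ p q : M, z = 1 ⊗ₜ p + I ⊗ₜ q := by
  induction z using TensorProduct.induction_on with
  | zero => exact ⟨0, 0, by simp⟩
  | tmul c m =>
    refine ⟨c.re • m, c.im • m, ?_⟩
    rw [tmul_smul, tmul_smul, smul_tmul', smul_tmul', ← add_tmul]
    congr 1
    simp [Complex.real_smul]
  | add x y hx hy =>
    obtain ⟨p, q, rfl⟩ := hx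
    obtain ⟨p', q', rfl⟩ := hy
    exact ⟨p + p', q + q', by rw [tmul_add, tmul_add]; abel⟩

theorem one_tmul_add_I_tmul_inj {p q p' q' : M} :
    (1 : ℂ) ⊗ₜ[ℝ] p + I ⊗ₜ q = 1 ⊗ₜ p' + I ⊗ₜ q' ↔ p = p' ∧ q = q' := by
  refine ⟨fun h ↦ ⟨?_, ?_⟩, by rintro ⟨rfl, rfl⟩; rfl⟩
  · simpa using congrArg ((TensorProduct.lid ℝ M).toLinearMap ∘ₗ rTensor M Complex.reLm) h
  · simpa using congrArg ((TensorProduct.lid ℝ M).toLinearMap ∘ₗ rTensor M Complex.imLm) h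

theorem one_tmul_add_I_tmul_eq_zero_iff {p q : M} :
    (1 : ℂ) ⊗ₜ[ℝ] p + I ⊗ₜ q = 0 ↔ p = 0 ∧ q = 0 := by
  simpa using one_tmul_add_I_tmul_inj (p' := (0 : M)) (q' := 0)

theorem LinearMap.baseChange_one_tmul_add_I_tmul (g : M →ₗ[ℝ] N) (p q : M) :
    g.baseChange ℂ (1 ⊗ₜ p + I ⊗ₜ q) = 1 ⊗ₜ g p + I ⊗ₜ g q := by
  simp

theorem I_smul_one_tmul_add_I_tmul (p q : M) :
    I • ((1 : ℂ) ⊗ₜ[ℝ] p + I ⊗ₜ q) = 1 ⊗ₜ (-q) + I ⊗ₜ p := by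
  rw [smul_add, smul_tmul', smul_tmul', smul_eq_mul, smul_eq_mul, mul_one, Complex.I_mul_I,
    tmul_neg, neg_tmul, add_comm]

theorem mem_eigenspace_baseChange_I_iff (T : M →ₗ[ℝ] M) (p q : M) :
    1 ⊗ₜ p + I ⊗ₜ q ∈ End.eigenspace (T.baseChange ℂ) I ↔ T p = -q ∧ T q = p := by
  rw [End.mem_eigenspace_iff, baseChange_one_tmul_add_I_tmul, I_smul_one_tmul_add_I_tmul,
    one_tmul_add_I_tmul_inj]

theorem mem_eigenspace_baseChange_neg_I_iff (T : M →ₗ[ℝ] M) (p q : M) :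
    1 ⊗ₜ p + I ⊗ₜ q ∈ End.eigenspace (T.baseChange ℂ) (-I) ↔ T p = q ∧ T q = -p := by
  rw [End.mem_eigenspace_iff, baseChange_one_tmul_add_I_tmul, neg_smul,
    I_smul_one_tmul_add_I_tmul, neg_add, ← tmul_neg, ← tmul_neg, neg_neg,
    one_tmul_add_I_tmul_inj]

def Submodule.IsComplexification (P : Submodule ℝ M) (S : Submodule ℂ (ℂ ⊗[ℝ] M)) : Prop :=
  ∀ p q : M, 1 ⊗ₜ p + I ⊗ₜ q ∈ S ↔ p ∈ P ∧ q ∈ P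

theorem Submodule.IsComplexification.eq_iff {P Q : Submodule ℝ M} {S T : Submodule ℂ (ℂ ⊗[ℝ] M)}
    (hS : P.IsComplexification S) (hT : Q.IsComplexification T) : S = T ↔ P = Q := by
  constructor
  · rintro rfl
    ext p
    simpa using (hS p 0).symm.trans (hT p 0)
  · rintro rfl
    ext z
    obtain ⟨p, q, rfl⟩ := exists_eq_one_tmul_add_I_tmul z
    rw [hS, hT]

end Complexification

section Pullback

open Complex (I)

variable {V W : Type*} [AddCommGroup V] [Module ℝ V] [AddCommGroup W] [Module ℝ W]

noncomputable def pullback (f : V →ₗ[ℝ] W) (U : Submodule ℝ (W × Dual ℝ W)) :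
    Submodule ℝ (V × Dual ℝ V) :=
  Submodule.map (LinearMap.prodMap LinearMap.id f.dualMap)
    (Submodule.comap (LinearMap.prodMap f LinearMap.id) U)

theorem mem_pullback {f : V →ₗ[ℝ] W} {U : Submodule ℝ (W × Dual ℝ W)} {x : V} {ξ : Dual ℝ V} :
    (x, ξ) ∈ pullback f U ↔ ∃ a, (f x, a) ∈ U ∧ f.dualMap a = ξ := by
  simp [pullback]

theorem one_tmul_add_I_tmul_mem_pullbackC_iff (f : V →ₗ[ℝ] W)
    (U : Submodule ℂ (ℂ ⊗[ℝ] (W × Dual ℝ W))) (x₁ x₂ : V) (ξ₁ ξ₂ : Dual ℝ V) :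
    1 ⊗ₜ (x₁, ξ₁) + I ⊗ₜ (x₂, ξ₂) ∈ PullbackC f U ↔
      ∃ a₁ a₂, f.dualMap a₁ = ξ₁ ∧ f.dualMap a₂ = ξ₂ ∧
        1 ⊗ₜ (f x₁, a₁) + I ⊗ₜ (f x₂, a₂) ∈ U := by
  constructor
  · rintro ⟨m, hm, hmz⟩
    obtain ⟨⟨y₁, a₁⟩, ⟨y₂, a₂⟩, rfl⟩ := exists_eq_one_tmul_add_I_tmul m
    simp only [baseChange_one_tmul_add_I_tmul, prodMap_apply, id_apply,
      one_tmul_add_I_tmul_inj, Prod.mk.injEq] at hm hmz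
    obtain ⟨⟨rfl, rfl⟩, rfl, rfl⟩ := hmz
    exact ⟨a₁, a₂, rfl, rfl, hm⟩
  · rintro ⟨a₁, a₂, rfl, rfl, h⟩
    exact ⟨1 ⊗ₜ (x₁, a₁) + I ⊗ₜ (x₂, a₂), by simpa using h, by simp⟩

theorem isComplexification_map_inl_ker_baseChange (f : V →ₗ[ℝ] W) :
    ((ker f).prod ⊥).IsComplexification
      (Submodule.map ((inl ℝ V (Dual ℝ V)).baseChange ℂ) (ker (f.baseChange ℂ))) := by
  rintro ⟨x₁, ξ₁⟩ ⟨x₂, ξ₂⟩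
  constructor
  · rintro ⟨m, hm, hmz⟩
    obtain ⟨y₁, y₂, rfl⟩ := exists_eq_one_tmul_add_I_tmul m
    simp only [baseChange_one_tmul_add_I_tmul, inl_apply, one_tmul_add_I_tmul_inj,
      Prod.mk.injEq] at hmz
    obtain ⟨⟨rfl, rfl⟩, rfl, rfl⟩ := hmz
    rw [SetLike.mem_coe, mem_ker, baseChange_one_tmul_add_I_tmul,
      one_tmul_add_I_tmul_eq_zero_iff] at hm
    simpa using hm
  · rintro ⟨⟨hx₁, rfl⟩, ⟨hx₂, rfl⟩⟩
    refine ⟨1 ⊗ₜ x₁ + I ⊗ₜ x₂, ?_, by simp⟩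
    simp_all

end Pullback

section ComplexStructure

open Complex (I)

variable {V W : Type*} [AddCommGroup V] [Module ℝ V] [AddCommGroup W] [Module ℝ W]
  {J : (W × Dual ℝ W) →ₗ[ℝ] (W × Dual ℝ W)}

theorem one_tmul_mem_pullbackC_eigenspace_inf (hJ : J ∘ₗ J = -LinearMap.id)
    (f : V →ₗ[ℝ] W) {p : V × Dual ℝ V}
    (hp : p ∈ pullback f (Submodule.map J ((⊥ : Submodule ℝ W).prod (ker f.dualMap)))) :
    1 ⊗ₜ p ∈ PullbackC f (End.eigenspace (J.baseChange ℂ) I) ⊓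
      PullbackC f (End.eigenspace (J.baseChange ℂ) (-I)) := by
  obtain ⟨x, ξ⟩ := p
  obtain ⟨c, ⟨⟨w, d⟩, ⟨hw, hd⟩, hJd⟩, rfl⟩ := mem_pullback.1 hp
  obtain rfl : w = 0 := hw
  have hJc : J (f x, c) = -(0, d) := by rw [← hJd, ← comp_apply, hJ]; rfl
  have h0 : (1 : ℂ) ⊗ₜ[ℝ] (x, f.dualMap c) = 1 ⊗ₜ (x, f.dualMap c) + I ⊗ₜ (0, 0) := by
    rw [Prod.mk_zero_zero, tmul_zero, add_zero]
  rw [h0, Submodule.mem_inf, one_tmul_add_I_tmul_mem_pullbackC_iff,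
    one_tmul_add_I_tmul_mem_pullbackC_iff]
  refine ⟨⟨c, d, rfl, hd, ?_⟩, ⟨c, -d, rfl, by simpa using hd, ?_⟩⟩
  · rw [mem_eigenspace_baseChange_I_iff, map_zero]
    exact ⟨hJc, hJd⟩
  · rw [mem_eigenspace_baseChange_neg_I_iff, map_zero, ← neg_zero, ← Prod.neg_mk, map_neg, hJd]
    exact ⟨hJc, rfl⟩

theorem isComplexification_pullbackC_eigenspace_inf (hJ : J ∘ₗ J = -LinearMap.id)
    (f : V →ₗ[ℝ] W) :
    (pullback f (Submodule.map J ((⊥ : Submodule ℝ W).prod (ker f.dualMap)))).IsComplexification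
      (PullbackC f (End.eigenspace (J.baseChange ℂ) I) ⊓
        PullbackC f (End.eigenspace (J.baseChange ℂ) (-I))) := by
  rintro ⟨x₁, ξ₁⟩ ⟨x₂, ξ₂⟩
  constructor
  · simp only [Submodule.mem_inf, one_tmul_add_I_tmul_mem_pullbackC_iff,
      mem_eigenspace_baseChange_I_iff, mem_eigenspace_baseChange_neg_I_iff]
    rintro ⟨⟨a₁, a₂, rfl, rfl, hJa₁, hJa₂⟩, ⟨b₁, b₂, hb₁, hb₂, hJb₁, hJb₂⟩⟩
    -- average the lifts to `L` and `L̄`; `J` maps their difference to twice the average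
    refine ⟨mem_pullback.2 ⟨(2 : ℝ)⁻¹ • (a₁ + b₁), ?_, by simp [hb₁]; module⟩,
      mem_pullback.2 ⟨(2 : ℝ)⁻¹ • (a₂ + b₂), ?_, by simp [hb₂]; module⟩⟩
    · have : (f x₁, (2 : ℝ)⁻¹ • (a₁ + b₁)) = (2 : ℝ)⁻¹ • J (0, a₂ - b₂) := by
        rw [show ((0 : W), a₂ - b₂) = (f x₂, a₂) - (f x₂, b₂) by simp, map_sub, hJa₂, hJb₂]
        ext <;> simp; module
      rw [this]
      exact Submodule.smul_mem _ _ (Submodule.mem_map_of_mem ⟨rfl, by simp [hb₂]⟩)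
    · have : (f x₂, (2 : ℝ)⁻¹ • (a₂ + b₂)) = (2 : ℝ)⁻¹ • J (0, b₁ - a₁) := by
        rw [show ((0 : W), b₁ - a₁) = (f x₁, b₁) - (f x₁, a₁) by simp, map_sub, hJa₁, hJb₁]
        ext <;> simp <;> module
      rw [this]
      exact Submodule.smul_mem _ _ (Submodule.mem_map_of_mem ⟨rfl, by simp [hb₁]⟩)
  · rintro ⟨hp, hq⟩
    have hIq := Submodule.smul_mem _ I (one_tmul_mem_pullbackC_eigenspace_inf hJ f hq)
    rw [smul_tmul', smul_eq_mul, mul_one] at hIq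
    exact Submodule.add_mem _ (one_tmul_mem_pullbackC_eigenspace_inf hJ f hp) hIq

end ComplexStructure

section BlockJ

variable {W : Type*} [AddCommGroup W] [Module ℝ W]
  {A : W →ₗ[ℝ] W} {piSh : Dual ℝ W →ₗ[ℝ] W} {sigFl : W →ₗ[ℝ] Dual ℝ W}

theorem blockJ_apply (X : W) (α : Dual ℝ W) :
    blockJ A piSh sigFl (X, α) = (A X + piSh α, sigFl X - A.dualMap α) := rfl

theorem blockJ_comp_self (hpi : ∀ α β : Dual ℝ W, α (piSh β) = - β (piSh α))
    (hsig : ∀ X Y : W, sigFl X Y = - sigFl Y X)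
    (h1 : A ∘ₗ A + piSh ∘ₗ sigFl = -LinearMap.id)
    (h2 : piSh ∘ₗ A.dualMap = A ∘ₗ piSh)
    (h3 : sigFl ∘ₗ A = A.dualMap ∘ₗ sigFl) :
    blockJ A piSh sigFl ∘ₗ blockJ A piSh sigFl = -LinearMap.id := by
  have hAA (X : W) : A (A X) + piSh (sigFl X) = -X := by simpa using LinearMap.congr_fun h1 X
  have hAA_dual (α : Dual ℝ W) : A.dualMap (A.dualMap α) + sigFl (piSh α) = -α := by
    ext Y
    have hσπ : sigFl (piSh α) Y = α (piSh (sigFl Y)) := by rw [hsig, hpi, neg_neg]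
    simp [hσπ, ← map_add, hAA]
  refine LinearMap.ext fun ⟨X, α⟩ ↦ Prod.ext ?_ ?_
  · have h2' : piSh (A.dualMap α) = A (piSh α) := LinearMap.congr_fun h2 α
    simp only [comp_apply, blockJ_apply, map_add, map_sub, h2', LinearMap.neg_apply, id_apply,
      Prod.fst_neg]
    linear_combination (norm := abel) hAA X
  · have h3' : sigFl (A X) = A.dualMap (sigFl X) := LinearMap.congr_fun h3 X
    simp only [comp_apply, blockJ_apply, map_add, map_sub, h3', LinearMap.neg_apply, id_apply,
      Prod.snd_neg]
    linear_combination (norm := abel) hAA_dual α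

variable {V : Type*} [AddCommGroup V] [Module ℝ V]

theorem mem_pullback_map_blockJ_iff (f : V →ₗ[ℝ] W) (x : V) (ξ : Dual ℝ V) :
    (x, ξ) ∈ pullback f (Submodule.map (blockJ A piSh sigFl)
        ((⊥ : Submodule ℝ W).prod (ker f.dualMap))) ↔
      ∃ d ∈ ker f.dualMap, piSh d = f x ∧ -f.dualMap (A.dualMap d) = ξ := by
  simp [mem_pullback, blockJ_apply, and_assoc]

theorem pullback_map_blockJ_eq_iff (f : V →ₗ[ℝ] W) :
    pullback f (Submodule.map (blockJ A piSh sigFl)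
        ((⊥ : Submodule ℝ W).prod (ker f.dualMap))) = (ker f).prod ⊥ ↔
      range f ⊓ Submodule.map piSh (ker f.dualMap) = ⊥ ∧
        ∀ α ∈ ker f.dualMap, piSh α = 0 → f.dualMap (A.dualMap α) = 0 := by
  have hmem := mem_pullback_map_blockJ_iff (A := A) (piSh := piSh) (sigFl := sigFl) f
  rw [le_antisymm_iff, and_iff_left]
  swap
  · rintro ⟨x, ξ⟩ ⟨hx, rfl : ξ = 0⟩
    exact (hmem x 0).2 ⟨0, zero_mem _, by simpa using hx.symm, by simp⟩
  constructor
  · intro h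
    refine ⟨(Submodule.eq_bot_iff _).2 ?_, fun α hα hπα ↦ ?_⟩
    · rintro _ ⟨⟨x, rfl⟩, d, hd, hdx⟩
      exact (h ((hmem x _).2 ⟨d, hd, hdx, rfl⟩)).1
    · simpa using (h ((hmem 0 _).2 ⟨α, hα, by simpa using hπα, rfl⟩)).2
  · rintro ⟨ha, hb⟩ ⟨x, ξ⟩ hxξ
    obtain ⟨d, hd, hdx, rfl⟩ := (hmem x ξ).1 hxξ
    have hfx : f x = 0 := (Submodule.eq_bot_iff _).1 ha (f x) ⟨⟨x, rfl⟩, d, hd, hdx⟩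
    exact ⟨hfx, by simp [hb d hd (hdx.trans hfx)]⟩

theorem map_range_le_range_sup_range_iff (hpi : ∀ α β : Dual ℝ W, α (piSh β) = - β (piSh α))
    (f : V →ₗ[ℝ] W) :
    Submodule.map A (range f) ≤ range f ⊔ range piSh ↔
      ∀ α ∈ ker f.dualMap, piSh α = 0 → f.dualMap (A.dualMap α) = 0 := by
  have hker : ker piSh.dualMap = ker piSh := by
    ext α
    rw [mem_ker, mem_ker, ← Module.forall_dual_apply_eq_zero_iff ℝ (piSh α), LinearMap.ext_iff]
    exact forall_congr' fun β ↦ by rw [dualMap_apply, hpi, LinearMap.zero_apply, neg_eq_zero]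
  rw [← Subspace.dualAnnihilator_le_dualAnnihilator_iff, Submodule.dualAnnihilator_sup_eq,
    ← range_comp, ← ker_dualMap_eq_dualAnnihilator_range, ← ker_dualMap_eq_dualAnnihilator_range,
    ← ker_dualMap_eq_dualAnnihilator_range, hker, ← dualMap_comp_dualMap]
  simp [SetLike.le_def]

end BlockJ

theorem backward_regular_iff
    (V W : Type*) [AddCommGroup V] [Module ℝ V]
    [AddCommGroup W] [Module ℝ W]
    (f : V →ₗ[ℝ] W)
    (A : W →ₗ[ℝ] W) (piSh : Module.Dual ℝ W →ₗ[ℝ] W)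
    (sigFl : W →ₗ[ℝ] Module.Dual ℝ W)
    (hpi : ∀ α β : Module.Dual ℝ W, α (piSh β) = - β (piSh α))
    (hsig : ∀ X Y : W, sigFl X Y = - sigFl Y X)
    (h1 : A ∘ₗ A + piSh ∘ₗ sigFl = -LinearMap.id)
    (h2 : piSh ∘ₗ A.dualMap = A ∘ₗ piSh)
    (h3 : sigFl ∘ₗ A = A.dualMap ∘ₗ sigFl) :
    (PullbackC f (Module.End.eigenspace
        (R := ℂ) (M := ℂ ⊗[ℝ] (W × Module.Dual ℝ W))
        ((blockJ A piSh sigFl).baseChange ℂ) Complex.I) ⊓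
      PullbackC f (Module.End.eigenspace
        (R := ℂ) (M := ℂ ⊗[ℝ] (W × Module.Dual ℝ W))
        ((blockJ A piSh sigFl).baseChange ℂ) (-Complex.I)) =
      Submodule.map ((LinearMap.inl ℝ V (Module.Dual ℝ V)).baseChange ℂ)
        (LinearMap.ker (f.baseChange ℂ))) ↔
    (LinearMap.range f ⊓ Submodule.map piSh (LinearMap.ker f.dualMap) = ⊥ ∧
      Submodule.map A (LinearMap.range f) ≤
        LinearMap.range f ⊔ LinearMap.range piSh) := by
  rw [(isComplexification_pullbackC_eigenspace_inf (blockJ_comp_self hpi hsig h1 h2 h3) f).eq_iff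
      (isComplexification_map_inl_ker_baseChange f),
    pullback_map_blockJ_eq_iff, map_range_le_range_sup_range_iff hpi]
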